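/- arXiv:1801.06938 — 3 statements merged into one kernel-verified Lean document; each statement's English description precedes it below -/
import Mathlib

section
/- (Proposition 4.1, one-mode example) Let x be a vector with ‖x‖_B = 1 and let E = xᵀAx/xᵀBx be its energy. Then min over real α of ‖αx − x₁‖_A (the angle between span{x} and span{x₁}) is bounded by √( λ₁λ₂(λ₁ − E) / ((λ₁ − λ₂)E) ). -/
/-!
In the coordinates `cₖ = xₖᵀ B x` with respect to the eigenbasis, `B` and `A` become the identity
and `diag(λ₁, λ₂, λ₃)`, so `∑ cₖ² = 1`, `E = ∑ λₖ cₖ²` and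
`‖α x - x₁‖_A² = λ₁ (α c₁ - 1)² + λ₂ α² c₂² + λ₃ α² c₃²`.
The `A`-orthogonal projection coefficient `α = λ₁ c₁ / E` turns this into `λ₁ (E - λ₁ c₁²) / E`,
and the bound follows from `E - λ₂ ≤ c₁² (λ₁ - λ₂)`, which holds because `λ₃ < λ₂`.
-/

open Matrix

lemma dotProduct_mulVec_comm_of_isSymm {n : Type*} [Fintype n] {M : Matrix n n ℝ}
    (hM : M.IsSymm) (v w : n → ℝ) : v ⬝ᵥ M *ᵥ w = w ⬝ᵥ M *ᵥ v := by
  rw [dotProduct_mulVec, ← mulVec_transpose, hM.eq, dotProduct_comm]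

lemma mul_mul_transpose_eq_diagonal_of_fin_three {W M : Matrix (Fin 3) (Fin 3) ℝ}
    (hM : M.IsSymm) {d1 d2 d3 : ℝ}
    (h11 : W 0 ⬝ᵥ M *ᵥ W 0 = d1) (h22 : W 1 ⬝ᵥ M *ᵥ W 1 = d2) (h33 : W 2 ⬝ᵥ M *ᵥ W 2 = d3)
    (h12 : W 0 ⬝ᵥ M *ᵥ W 1 = 0) (h13 : W 0 ⬝ᵥ M *ᵥ W 2 = 0) (h23 : W 1 ⬝ᵥ M *ᵥ W 2 = 0) :
    W * M * Wᵀ = diagonal ![d1, d2, d3] := by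
  have hcomm := dotProduct_mulVec_comm_of_isSymm hM
  ext k l
  rw [mul_mul_apply, transpose_transpose]
  fin_cases k <;> fin_cases l <;>
    simp [h11, h22, h33, h12, h13, h23, hcomm (W 1) (W 0), hcomm (W 2) (W 0), hcomm (W 2) (W 1)]

section GramCoordinates

variable {n : Type*} [Fintype n] [DecidableEq n] {W B : Matrix n n ℝ}

lemma mulVec_eq_single_of_gram_eq_one (hW : W * B * Wᵀ = 1) (k : n) :
    (W * B) *ᵥ W k = Pi.single k 1 := by
  have hrow : W k = Wᵀ *ᵥ Pi.single k 1 := by rw [mulVec_single_one]; rfl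
  rw [hrow, mulVec_mulVec, hW, one_mulVec]

lemma dotProduct_mulVec_self_eq_sum (hW : W * B * Wᵀ = 1) {M : Matrix n n ℝ} {d : n → ℝ}
    (hM : W * M * Wᵀ = diagonal d) (y : n → ℝ) :
    y ⬝ᵥ M *ᵥ y = ∑ k, d k * ((W * B) *ᵥ y) k ^ 2 := by
  set c := (W * B) *ᵥ y
  have hy : y = Wᵀ *ᵥ c := by rw [mulVec_mulVec, mul_eq_one_comm.mp hW, one_mulVec]
  calc y ⬝ᵥ M *ᵥ y = c ⬝ᵥ (W * M * Wᵀ) *ᵥ c := by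
        rw [hy, ← mulVec_mulVec, ← mulVec_mulVec, dotProduct_mulVec c W, ← mulVec_transpose]
    _ = ∑ k, d k * c k ^ 2 := by
        simp only [hM, dotProduct, mulVec_diagonal]
        exact Finset.sum_congr rfl fun k _ => by ring

lemma dotProduct_mulVec_self_eq_sum_sq (hW : W * B * Wᵀ = 1) (y : n → ℝ) :
    y ⬝ᵥ B *ᵥ y = ∑ k, ((W * B) *ᵥ y) k ^ 2 := by
  simpa using dotProduct_mulVec_self_eq_sum hW (d := fun _ => 1) (by rwa [diagonal_one]) y

end GramCoordinates

lemma one_mode_bound {l1 l2 l3 c1 c2 c3 E : ℝ} (h12 : l2 < l1) (h23 : l3 < l2) (h3 : 0 < l3)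
    (hc : c1 ^ 2 + c2 ^ 2 + c3 ^ 2 = 1) (hE : E = l1 * c1 ^ 2 + l2 * c2 ^ 2 + l3 * c3 ^ 2) :
    let α := l1 * c1 / E
    l1 * (α * c1 - 1) ^ 2 + l2 * (α * c2) ^ 2 + l3 * (α * c3) ^ 2
      ≤ l1 * l2 * (l1 - E) / ((l1 - l2) * E) := by
  intro α
  have hE_pos : 0 < E := by nlinarith [sq_nonneg c1, sq_nonneg c2, sq_nonneg c3]
  have hval : l1 * (α * c1 - 1) ^ 2 + l2 * (α * c2) ^ 2 + l3 * (α * c3) ^ 2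
      = l1 * (E - l1 * c1 ^ 2) / E := by
    simp only [α]
    field_simp
    linear_combination -(l1 * c1) ^ 2 * hE
  have hmass : E - l2 ≤ c1 ^ 2 * (l1 - l2) := by
    nlinarith [mul_nonneg (sq_nonneg c3) (sub_nonneg.mpr h23.le)]
  rw [hval, div_le_div_iff₀ hE_pos (mul_pos (sub_pos.mpr h12) hE_pos)]
  nlinarith [mul_nonneg (mul_nonneg hE_pos.le (sq_nonneg l1)) (sub_nonneg.mpr hmass)]

theorem stmt_2_general
    (A B : Matrix (Fin 3) (Fin 3) ℝ) (hA : A.PosDef) (hB : B.PosDef)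
    (x1 x2 x3 : Fin 3 → ℝ) (l1 l2 l3 : ℝ)
    (hB11 : x1 ⬝ᵥ B *ᵥ x1 = 1) (hB22 : x2 ⬝ᵥ B *ᵥ x2 = 1) (hB33 : x3 ⬝ᵥ B *ᵥ x3 = 1)
    (hB12 : x1 ⬝ᵥ B *ᵥ x2 = 0) (hB13 : x1 ⬝ᵥ B *ᵥ x3 = 0) (hB23 : x2 ⬝ᵥ B *ᵥ x3 = 0)
    (hA11 : x1 ⬝ᵥ A *ᵥ x1 = l1) (hA22 : x2 ⬝ᵥ A *ᵥ x2 = l2) (hA33 : x3 ⬝ᵥ A *ᵥ x3 = l3)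
    (hA12 : x1 ⬝ᵥ A *ᵥ x2 = 0) (hA13 : x1 ⬝ᵥ A *ᵥ x3 = 0) (hA23 : x2 ⬝ᵥ A *ᵥ x3 = 0)
    (hord1 : l2 < l1) (hord2 : l3 < l2) (hord3 : 0 < l3)
    (x : Fin 3 → ℝ) (hxB : x ⬝ᵥ B *ᵥ x = 1)
    (E : ℝ) (hE : E = (x ⬝ᵥ A *ᵥ x) / (x ⬝ᵥ B *ᵥ x)) :
    sInf {r : ℝ | ∃ α : ℝ, r = Real.sqrt ((α • x - x1) ⬝ᵥ A *ᵥ (α • x - x1))}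
      ≤ Real.sqrt (l1 * l2 * (l1 - E) / ((l1 - l2) * E)) := by
  set W : Matrix (Fin 3) (Fin 3) ℝ := of ![x1, x2, x3]
  have hgramB : W * B * Wᵀ = 1 := by
    rw [mul_mul_transpose_eq_diagonal_of_fin_three (isHermitian_iff_isSymm.mp hB.1)
      hB11 hB22 hB33 hB12 hB13 hB23, ← diagonal_one]
    congr 1
    ext k
    fin_cases k <;> rfl
  have hgramA : W * A * Wᵀ = diagonal ![l1, l2, l3] :=
    mul_mul_transpose_eq_diagonal_of_fin_three (isHermitian_iff_isSymm.mp hA.1)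
      hA11 hA22 hA33 hA12 hA13 hA23
  set c := (W * B) *ᵥ x
  have hc : c 0 ^ 2 + c 1 ^ 2 + c 2 ^ 2 = 1 := by
    rw [← hxB, dotProduct_mulVec_self_eq_sum_sq hgramB, Fin.sum_univ_three]
  have hEc : E = l1 * c 0 ^ 2 + l2 * c 1 ^ 2 + l3 * c 2 ^ 2 := by
    rw [hE, hxB, div_one, dotProduct_mulVec_self_eq_sum hgramB hgramA, Fin.sum_univ_three]
    rfl
  set α := l1 * c 0 / E
  have hval : (α • x - x1) ⬝ᵥ A *ᵥ (α • x - x1)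
      = l1 * (α * c 0 - 1) ^ 2 + l2 * (α * c 1) ^ 2 + l3 * (α * c 2) ^ 2 := by
    rw [dotProduct_mulVec_self_eq_sum hgramB hgramA, mulVec_sub, mulVec_smul,
      show x1 = W 0 from rfl, mulVec_eq_single_of_gram_eq_one hgramB, Fin.sum_univ_three]
    simp [c]
  have hbdd : BddBelow {r : ℝ | ∃ α : ℝ, r = Real.sqrt ((α • x - x1) ⬝ᵥ A *ᵥ (α • x - x1))} :=
    ⟨0, by rintro _ ⟨β, rfl⟩; exact Real.sqrt_nonneg _⟩
  calc _ ≤ Real.sqrt ((α • x - x1) ⬝ᵥ A *ᵥ (α • x - x1)) := csInf_le hbdd ⟨α, rfl⟩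
    _ ≤ _ := Real.sqrt_le_sqrt (hval ▸ one_mode_bound hord1 hord2 hord3 hc hEc)

/-- Proposition 4.1 (one-mode example): for `x` with `‖x‖_B = 1` and energy
`E = xᵀAx / xᵀBx`, the minimum over `α` of `‖α x − x₁‖_A` is bounded by
`√(λ₁λ₂(λ₁ − E) / ((λ₁ − λ₂) E))`. -/
theorem stmt_2
    (A B : Matrix (Fin 3) (Fin 3) ℝ) (hA : A.PosDef) (hB : B.PosDef)
    (x1 x2 x3 : Fin 3 → ℝ) (l1 l2 l3 : ℝ)
    (heig1 : A *ᵥ x1 = l1 • (B *ᵥ x1))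
    (heig2 : A *ᵥ x2 = l2 • (B *ᵥ x2))
    (heig3 : A *ᵥ x3 = l3 • (B *ᵥ x3))
    (hB11 : x1 ⬝ᵥ B *ᵥ x1 = 1) (hB22 : x2 ⬝ᵥ B *ᵥ x2 = 1) (hB33 : x3 ⬝ᵥ B *ᵥ x3 = 1)
    (hB12 : x1 ⬝ᵥ B *ᵥ x2 = 0) (hB13 : x1 ⬝ᵥ B *ᵥ x3 = 0) (hB23 : x2 ⬝ᵥ B *ᵥ x3 = 0)
    (hA11 : x1 ⬝ᵥ A *ᵥ x1 = l1) (hA22 : x2 ⬝ᵥ A *ᵥ x2 = l2) (hA33 : x3 ⬝ᵥ A *ᵥ x3 = l3)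
    (hA12 : x1 ⬝ᵥ A *ᵥ x2 = 0) (hA13 : x1 ⬝ᵥ A *ᵥ x3 = 0) (hA23 : x2 ⬝ᵥ A *ᵥ x3 = 0)
    (hord1 : l2 < l1) (hord2 : l3 < l2) (hord3 : 0 < l3)
    (x : Fin 3 → ℝ) (hxB : x ⬝ᵥ B *ᵥ x = 1)
    (E : ℝ) (hE : E = (x ⬝ᵥ A *ᵥ x) / (x ⬝ᵥ B *ᵥ x)) :
    sInf {r : ℝ | ∃ α : ℝ, r = Real.sqrt ((α • x - x1) ⬝ᵥ A *ᵥ (α • x - x1))}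
      ≤ Real.sqrt (l1 * l2 * (l1 - E) / ((l1 - l2) * E)) :=
  stmt_2_general A B hA hB x1 x2 x3 l1 l2 l3 hB11 hB22 hB33 hB12 hB13 hB23 hA11 hA22 hA33 hA12 hA13
    hA23 hord1 hord2 hord3 x hxB E hE
end

section
/- If C ∈ ℝ^{n×k} satisfies CᵀC = I, with top block C^h ∈ ℝ^{k×k} and bottom block C^l ∈ ℝ^{(n−k)×k}, and Λ^h = diag(λ₁,…,λ_k) with λ₁ ≥ … ≥ λ_k > 0, then Tr(Λ^h − C^hᵀΛ^hC^h) ≥ λ_k Tr(C^lᵀC^l). -/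
/-!
Let `H`, `L` be the top and bottom blocks of `C` and `rᵢ = (H Hᵀ)ᵢᵢ` the squared norms of the rows
of `H`. Since `C Cᵀ` is a symmetric idempotent, every `rᵢ` lies in `[0, 1]`. Hence
`Tr(Λ - Hᵀ Λ H) = ∑ λᵢ (1 - rᵢ) ≥ λ_min ∑ (1 - rᵢ)`, and `∑ (1 - rᵢ) = Tr(Lᵀ L)` because
`Tr(Hᵀ H) + Tr(Lᵀ L) = Tr(Cᵀ C) = k + 1`.
-/

open Matrix Finset

namespace Matrix

variable {R m n : Type*}

theorem mul_transpose_self_diag_le_one [CommRing R] [LinearOrder R] [IsStrictOrderedRing R]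
    [Fintype m] [Fintype n] [DecidableEq n] {C : Matrix m n R} (hC : Cᵀ * C = 1) (i : m) :
    (C * Cᵀ) i i ≤ 1 := by
  set P := C * Cᵀ
  have hidem : P * P = P := by
    rw [Matrix.mul_assoc, ← Matrix.mul_assoc Cᵀ, hC, Matrix.one_mul]
  have hsymm : ∀ j, P j i = P i j := fun j => by
    simp only [P, mul_apply, transpose_apply, mul_comm]
  have hsq : P i i = ∑ j, P i j ^ 2 := by
    conv_lhs => rw [← hidem]
    simp only [mul_apply, hsymm, sq]
  have hge : P i i ^ 2 ≤ P i i :=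
    hsq ▸ single_le_sum (f := fun j => P i j ^ 2) (fun j _ => sq_nonneg _) (mem_univ i)
  nlinarith [sq_nonneg (P i i)]

theorem trace_transpose_mul_diagonal_mul [CommSemiring R] [Fintype m] [Fintype n] [DecidableEq m]
    (A : Matrix m n R) (d : m → R) : (Aᵀ * diagonal d * A).trace = ∑ i, d i * (A * Aᵀ) i i := by
  rw [trace_mul_cycle]
  simp [trace, mul_diagonal, mul_comm]

theorem transpose_mul_self_eq_submatrix_inl_add_submatrix_inr {m' : Type*} [Semiring R]
    [Fintype m] [Fintype m'] (C : Matrix (m ⊕ m') n R) :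
    Cᵀ * C = (C.submatrix Sum.inl id)ᵀ * C.submatrix Sum.inl id +
      (C.submatrix Sum.inr id)ᵀ * C.submatrix Sum.inr id := by
  conv_lhs => rw [← fromRows_toRows C]
  rw [transpose_fromRows, fromCols_mul_fromRows]
  rfl

theorem mul_trace_lower_block_le_trace_diagonal_sub_conj [CommRing R] [LinearOrder R]
    [IsStrictOrderedRing R] [Fintype m] [Fintype n] [DecidableEq n] (C : Matrix (n ⊕ m) n R)
    (hC : Cᵀ * C = 1) (lam : n → R) {μ : R} (hμ : ∀ i, μ ≤ lam i) :
    μ * ((C.submatrix Sum.inr id)ᵀ * C.submatrix Sum.inr id).trace ≤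
      (diagonal lam - (C.submatrix Sum.inl id)ᵀ * diagonal lam * C.submatrix Sum.inl id).trace := by
  set H := C.submatrix Sum.inl id
  set L := C.submatrix Sum.inr id
  have hrow : ∀ i, (H * Hᵀ) i i ≤ 1 := fun i => mul_transpose_self_diag_le_one hC (Sum.inl i)
  have hsplit : (Fintype.card n : R) = (H * Hᵀ).trace + (Lᵀ * L).trace := by
    rw [trace_mul_comm, ← trace_add, ← transpose_mul_self_eq_submatrix_inl_add_submatrix_inr, hC,
      trace_one]
  have hL : (Lᵀ * L).trace = ∑ i, (1 - (H * Hᵀ) i i) := by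
    rw [sum_sub_distrib, sum_const, card_univ, nsmul_one, hsplit]
    exact (add_sub_cancel_left _ _).symm
  calc μ * (Lᵀ * L).trace = ∑ i, μ * (1 - (H * Hᵀ) i i) := by rw [hL, mul_sum]
    _ ≤ ∑ i, lam i * (1 - (H * Hᵀ) i i) :=
      sum_le_sum fun i _ => mul_le_mul_of_nonneg_right (hμ i) (sub_nonneg.2 (hrow i))
    _ = (diagonal lam - Hᵀ * diagonal lam * H).trace := by
      simp only [trace_sub, trace_diagonal, trace_transpose_mul_diagonal_mul, mul_sub, mul_one,
        sum_sub_distrib]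

end Matrix

theorem stmt_5_general (k m : ℕ)
    (C : Matrix (Fin (k+1) ⊕ Fin m) (Fin (k+1)) ℝ)
    (hC : Cᵀ * C = 1)
    (lam : Fin (k+1) → ℝ)
    (hmono : ∀ i j : Fin (k+1), i ≤ j → lam j ≤ lam i) :
    lam (Fin.last k) * ((C.submatrix Sum.inr id)ᵀ * (C.submatrix Sum.inr id)).trace ≤
      (Matrix.diagonal lam -
        (C.submatrix Sum.inl id)ᵀ * Matrix.diagonal lam * (C.submatrix Sum.inl id)).trace :=
  mul_trace_lower_block_le_trace_diagonal_sub_conj C hC lam fun i => hmono i _ (Fin.le_last i)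

/-- If `C ∈ ℝ^{n×k}` satisfies `CᵀC = I`, with top block `Cʰ` and bottom block
`Cˡ`, and `Λʰ = diag(λ₁,…,λ_k)` with `λ₁ ≥ … ≥ λ_k > 0`, then
`Tr(Λʰ − CʰᵀΛʰCʰ) ≥ λ_k Tr(CˡᵀCˡ)`.  Here the top block has `k+1` rows
(indexed by `Sum.inl`) and the bottom block `m` rows (indexed by `Sum.inr`). -/
theorem stmt_5 (k m : ℕ)
    (C : Matrix (Fin (k+1) ⊕ Fin m) (Fin (k+1)) ℝ)
    (hC : Cᵀ * C = 1)
    (lam : Fin (k+1) → ℝ)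
    (hmono : ∀ i j : Fin (k+1), i ≤ j → lam j ≤ lam i)
    (hpos : 0 < lam (Fin.last k)) :
    lam (Fin.last k) * ((C.submatrix Sum.inr id)ᵀ * (C.submatrix Sum.inr id)).trace ≤
      (Matrix.diagonal lam -
        (C.submatrix Sum.inl id)ᵀ * Matrix.diagonal lam * (C.submatrix Sum.inl id)).trace :=
  stmt_5_general k m C hC lam hmono
end

section
/- (Theorem 4.6, abstract Hilbert space version) Let H₁, H₂ be real Hilbert spaces and P : H₁ → H₂ a bounded linear map. Let (ψᵢ)_{i≥1} be an orthonormal family in H₁ such that (Pψᵢ) are pairwise orthogonal in H₂ with ‖Pψᵢ‖² = λᵢ, where λ₁ ≥ λ₂ ≥ … ≥ 0. Let u = Σ_{i≥1} uᵢψᵢ with Σ uᵢ² ≤ 1, and let Γₙ be a subspace of H₂ such that for every v in Ψₙ := span{ψ₁,…,ψₙ} with ‖v‖_{H₁} ≤ 1 there exists γ ∈ Γₙ with ‖Pv − γ‖_{H₂} ≤ D. Then inf over γ ∈ Γₙ of ‖Pu − γ‖_{H₂} ≤ √λ_{n+1} + D. -/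
/-!
Let `v` be the projection of `u` onto `span {ψ 0, …, ψ (n-1)}`. Orthonormality gives `‖v‖ ≤ 1`,
so `P v` lies within `D` of some `γ ∈ Γ`. The remainder `P u - P v = Σ_{i ≥ n} c i • P (ψ i)` is an
orthogonal series whose terms have `‖P (ψ i)‖² = lam i ≤ lam n`, so by Pythagoras
`‖P u - P v‖² ≤ lam n * Σ_{i ≥ n} c i² ≤ lam n`. The triangle inequality concludes.
-/

open Finset

section Orthogonal

variable {E : Type*} [NormedAddCommGroup E] [InnerProductSpace ℝ E]

theorem norm_sum_smul_sq_of_pairwise_inner_eq_zero {ι : Type*} {x : ι → E}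
    (hx : Pairwise fun i j => inner ℝ (x i) (x j) = (0 : ℝ)) (a : ι → ℝ) (s : Finset ι) :
    ‖∑ i ∈ s, a i • x i‖ ^ 2 = ∑ i ∈ s, a i ^ 2 * ‖x i‖ ^ 2 := by
  rw [← real_inner_self_eq_norm_sq, sum_inner]
  refine sum_congr rfl fun i hi => ?_
  rw [inner_sum, sum_eq_single i]
  · rw [real_inner_smul_left, real_inner_smul_right, real_inner_self_eq_norm_sq]; ring
  · intro j _ hji
    rw [real_inner_smul_left, real_inner_smul_right, hx hji.symm]; ring
  · exact fun hi' => absurd hi hi'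

theorem norm_sq_le_of_hasSum_pairwise_inner_eq_zero {ι : Type*} {x : ι → E}
    (hx : Pairwise fun i j => inner ℝ (x i) (x j) = (0 : ℝ)) {L : ℝ} (hL : ∀ i, ‖x i‖ ^ 2 ≤ L)
    {a : ι → ℝ} (ha : Summable fun i => a i ^ 2) {w : E} (hw : HasSum (fun i => a i • x i) w) :
    ‖w‖ ^ 2 ≤ L * ∑' i, a i ^ 2 := by
  rcases isEmpty_or_nonempty ι with hι | ⟨⟨i₀⟩⟩
  · simp [hw.unique (hasSum_empty (f := fun i => a i • x i))]
  have hL₀ : 0 ≤ L := (sq_nonneg _).trans (hL i₀)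
  refine le_of_tendsto' (hw.norm.pow 2) fun s => ?_
  calc ‖∑ i ∈ s, a i • x i‖ ^ 2 = ∑ i ∈ s, a i ^ 2 * ‖x i‖ ^ 2 :=
        norm_sum_smul_sq_of_pairwise_inner_eq_zero hx a s
    _ ≤ ∑ i ∈ s, a i ^ 2 * L := sum_le_sum fun i _ => by gcongr; exact hL i
    _ = L * ∑ i ∈ s, a i ^ 2 := by rw [mul_sum]; simp_rw [mul_comm]
    _ ≤ L * ∑' i, a i ^ 2 := by gcongr; exact ha.sum_le_tsum s fun i _ => sq_nonneg _

theorem norm_sub_sum_range_le_of_hasSum_pairwise_inner_eq_zero {x : ℕ → E}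
    (hx : Pairwise fun i j => inner ℝ (x i) (x j) = (0 : ℝ)) {a : ℕ → ℝ}
    (ha : Summable fun i => a i ^ 2) (ha₁ : ∑' i, a i ^ 2 ≤ 1) {w : E}
    (hw : HasSum (fun i => a i • x i) w) (n : ℕ) {L : ℝ} (hL : ∀ i, n ≤ i → ‖x i‖ ^ 2 ≤ L) :
    ‖w - ∑ i ∈ range n, a i • x i‖ ≤ √L := by
  have htail : HasSum (fun i => a (i + n) • x (i + n)) (w - ∑ i ∈ range n, a i • x i) :=
    (hasSum_nat_add_iff' n).mpr hw
  have htail_sq : ∑' i, a (i + n) ^ 2 ≤ 1 := by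
    have hhead : 0 ≤ ∑ i ∈ range n, a i ^ 2 := sum_nonneg fun i _ => sq_nonneg _
    linarith [ha.sum_add_tsum_nat_add n]
  have hL₀ : 0 ≤ L := (sq_nonneg _).trans (hL n le_rfl)
  refine Real.le_sqrt_of_sq_le ?_
  calc _ ≤ L * ∑' i, a (i + n) ^ 2 :=
        norm_sq_le_of_hasSum_pairwise_inner_eq_zero (fun i j hij => hx (by simpa using hij))
          (fun i => hL (i + n) (Nat.le_add_left n i)) ((summable_nat_add_iff n).mpr ha) htail
    _ ≤ L := mul_le_of_le_one_right hL₀ htail_sq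

end Orthogonal

theorem stmt_16_general
    {H₁ H₂ : Type*}
    [NormedAddCommGroup H₁] [InnerProductSpace ℝ H₁]
    [NormedAddCommGroup H₂] [InnerProductSpace ℝ H₂]
    (P : H₁ →L[ℝ] H₂)
    (ψ : ℕ → H₁) (hψ : Orthonormal ℝ ψ)
    (lam : ℕ → ℝ) (hlam_mono : Antitone lam)
    (hPnorm : ∀ i, ‖P (ψ i)‖ ^ 2 = lam i)
    (hPorth : ∀ i j, i ≠ j → inner ℝ (P (ψ i)) (P (ψ j)) = (0 : ℝ))
    (c : ℕ → ℝ) (u : H₁)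
    (hu : HasSum (fun i => c i • ψ i) u)
    (hc_summable : Summable (fun i => c i ^ 2))
    (hc : ∑' i, c i ^ 2 ≤ 1)
    (n : ℕ) (Γ : Submodule ℝ H₂) (D : ℝ)
    (happrox : ∀ v ∈ Submodule.span ℝ (Set.range fun i : Fin n => ψ i),
        ‖v‖ ≤ 1 → ∃ γ ∈ Γ, ‖P v - γ‖ ≤ D) :
    ⨅ γ : Γ, ‖P u - (γ : H₂)‖ ≤ Real.sqrt (lam n) + D := by
  set v := ∑ i ∈ range n, c i • ψ i
  have hv_mem : v ∈ Submodule.span ℝ (Set.range fun i : Fin n => ψ i) :=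
    Submodule.sum_mem _ fun i hi => Submodule.smul_mem _ _
      (Submodule.subset_span ⟨⟨i, mem_range.mp hi⟩, rfl⟩)
  have hv_norm : ‖v‖ ≤ 1 := by
    have hhead : ∑ i ∈ range n, c i ^ 2 ≤ 1 :=
      (hc_summable.sum_le_tsum _ fun i _ => sq_nonneg _).trans hc
    have hv_sq : ‖v‖ ^ 2 = ∑ i ∈ range n, c i ^ 2 := by
      simp [v, norm_sum_smul_sq_of_pairwise_inner_eq_zero hψ.2, hψ.1]
    exact (sq_le_one_iff₀ (norm_nonneg v)).mp (hv_sq ▸ hhead)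
  obtain ⟨γ, hγ, hPvγ⟩ := happrox v hv_mem hv_norm
  have hPuv : ‖P u - P v‖ ≤ √(lam n) := by
    simpa [v, map_sum] using norm_sub_sum_range_le_of_hasSum_pairwise_inner_eq_zero
      (fun i j => hPorth i j) hc_summable hc (by simpa using P.hasSum hu) n
      fun i hi => (hPnorm i).trans_le (hlam_mono hi)
  calc ⨅ γ : Γ, ‖P u - (γ : H₂)‖ ≤ ‖P u - γ‖ :=
        ciInf_le ⟨0, Set.forall_mem_range.2 fun _ => norm_nonneg _⟩ (⟨γ, hγ⟩ : Γ)
    _ ≤ ‖P u - P v‖ + ‖P v - γ‖ := norm_sub_le_norm_sub_add_norm_sub _ _ _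
    _ ≤ √(lam n) + D := add_le_add hPuv hPvγ

/-- Theorem 4.6 (abstract Hilbert space version).  Let `P : H₁ → H₂` be a
bounded linear map between real Hilbert spaces, `(ψ i)` an orthonormal family
in `H₁` with `(P ψ i)` pairwise orthogonal in `H₂` and `‖P ψ i‖² = λ i`, the
`λ i` nonincreasing and nonnegative.  If `u = Σ c i • ψ i` with `Σ c i ² ≤ 1`,
and `Γ` is a subspace of `H₂` such that every `v` in `span {ψ 0, …, ψ (n-1)}`
with `‖v‖ ≤ 1` admits `γ ∈ Γ` with `‖P v − γ‖ ≤ D`, then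
`inf_{γ ∈ Γ} ‖P u − γ‖ ≤ √(λ n) + D`.  (Indices are shifted: the paper's
`ψ₁, ψ₂, …` is `ψ 0, ψ 1, …`, so the paper's `λ_{n+1}` is `lam n`.) -/
theorem stmt_16
    {H₁ H₂ : Type*}
    [NormedAddCommGroup H₁] [InnerProductSpace ℝ H₁] [CompleteSpace H₁]
    [NormedAddCommGroup H₂] [InnerProductSpace ℝ H₂] [CompleteSpace H₂]
    (P : H₁ →L[ℝ] H₂)
    (ψ : ℕ → H₁) (hψ : Orthonormal ℝ ψ)
    (lam : ℕ → ℝ) (hlam_mono : Antitone lam) (hlam_nonneg : ∀ i, 0 ≤ lam i)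
    (hPnorm : ∀ i, ‖P (ψ i)‖ ^ 2 = lam i)
    (hPorth : ∀ i j, i ≠ j → inner ℝ (P (ψ i)) (P (ψ j)) = (0 : ℝ))
    (c : ℕ → ℝ) (u : H₁)
    (hu : HasSum (fun i => c i • ψ i) u)
    (hc_summable : Summable (fun i => c i ^ 2))
    (hc : ∑' i, c i ^ 2 ≤ 1)
    (n : ℕ) (Γ : Submodule ℝ H₂) (D : ℝ) (hD : 0 ≤ D)
    (happrox : ∀ v ∈ Submodule.span ℝ (Set.range fun i : Fin n => ψ i),
        ‖v‖ ≤ 1 → ∃ γ ∈ Γ, ‖P v - γ‖ ≤ D) :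
    ⨅ γ : Γ, ‖P u - (γ : H₂)‖ ≤ Real.sqrt (lam n) + D :=
  stmt_16_general P ψ hψ lam hlam_mono hPnorm hPorth c u hu hc_summable hc n Γ D happrox
end
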